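/- Let γ̃ ∈ ℝ with γ̃ ≠ 0 and γ̃ ≠ 2, let Q ∈ ℝ, and let I ⊆ (0,∞) be an open interval on which α(τ) + Q ≠ 0 and 1 + δ(τ) ≠ 0, where α(τ) := τ^{1 − 2/γ̃} and δ(τ) := (γ̃−2)·α(τ)/(α(τ) + Q). Define p(τ) := 4(γ̃−1)/(3γ̃²τ²), ρ(τ) := (4/(3γ̃²τ²))·(1 + δ(τ)) and π(τ) := p(τ)/ρ(τ). Then on I the identity p'(τ)·(π(τ)+1)·(π(τ)+γ̃−1) = 2γ̃·π(τ)²·ρ'(τ) holds; in particular, wherever ρ'(τ) ≠ 0 and (π+1)(π+γ̃−1) ≠ 0, the square of the speed of sound χ = p'(τ)/ρ'(τ) equals 2γ̃π²/((π+1)(π+γ̃−1)). -/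
import Mathlib


noncomputable section

/-- The pressure of the ideal T-models (`γ̃ ≠ 2`). -/
def pT (γt : ℝ) : ℝ → ℝ := fun τ => 4 * (γt - 1) / (3 * γt ^ 2 * τ ^ 2)

/-- The energy density of the ideal T-models (`γ̃ ≠ 2`), with `α(τ) = τ^{1−2/γ̃}` and
energy density contrast `δ = (γ̃−2)α/(α+Q)`. -/
def rhoT (γt Q : ℝ) : ℝ → ℝ :=
  fun τ => 4 / (3 * γt ^ 2 * τ ^ 2)
    * (1 + (γt - 2) * τ ^ (1 - 2 / γt) / (τ ^ (1 - 2 / γt) + Q))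

/-- The hydrodynamic quantity `π = p/ρ` of the ideal T-models. -/
def piT (γt Q : ℝ) : ℝ → ℝ := fun τ => pT γt τ / rhoT γt Q τ

/-- For the ideal T-models with `γ̃ ∉ {0,2}` one has
`p'(π+1)(π+γ̃−1) = 2γ̃π²ρ'`; in particular, wherever `ρ' ≠ 0` and
`(π+1)(π+γ̃−1) ≠ 0`, the square of the speed of sound is
`χ = p'/ρ' = 2γ̃π²/((π+1)(π+γ̃−1))`. -/
theorem ideal_tmodel_indicatrix
    (γt Q : ℝ) (hγ0 : γt ≠ 0) (hγ2 : γt ≠ 2)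
    (I : Set ℝ) (hIopen : IsOpen I) (hIconn : I.OrdConnected)
    (hIpos : I ⊆ Set.Ioi (0 : ℝ))
    (hαQ : ∀ τ ∈ I, τ ^ (1 - 2 / γt) + Q ≠ 0)
    (hδ : ∀ τ ∈ I,
      1 + (γt - 2) * τ ^ (1 - 2 / γt) / (τ ^ (1 - 2 / γt) + Q) ≠ 0) :
    ∀ τ ∈ I,
      deriv (pT γt) τ * (piT γt Q τ + 1) * (piT γt Q τ + γt - 1)
        = 2 * γt * piT γt Q τ ^ 2 * deriv (rhoT γt Q) τ
      ∧ (deriv (rhoT γt Q) τ ≠ 0 → (piT γt Q τ + 1) * (piT γt Q τ + γt - 1) ≠ 0 →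
          deriv (pT γt) τ / deriv (rhoT γt Q) τ
            = 2 * γt * piT γt Q τ ^ 2 / ((piT γt Q τ + 1) * (piT γt Q τ + γt - 1))) := by
  intro τ hτI
  have hτ : (0:ℝ) < τ := hIpos hτI
  have hτ0 : τ ≠ 0 := ne_of_gt hτ
  have hA : τ ^ (1 - 2 / γt) + Q ≠ 0 := hαQ τ hτI
  have hu : 1 + (γt - 2) * τ ^ (1 - 2 / γt) / (τ ^ (1 - 2 / γt) + Q) ≠ 0 := hδ τ hτI
  have hdne : 3 * γt ^ 2 * τ ^ 2 ≠ 0 :=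
    mul_ne_zero (mul_ne_zero three_ne_zero (pow_ne_zero 2 hγ0)) (pow_ne_zero 2 hτ0)
  have hden : HasDerivAt (fun t : ℝ => 3 * γt ^ 2 * t ^ 2) (3 * γt ^ 2 * (2 * τ)) τ := by
    have := (hasDerivAt_pow 2 τ).const_mul (3 * γt ^ 2)
    simpa using this
  -- derivative of pT
  have hDp : deriv (pT γt) τ
      = (0 * (3 * γt ^ 2 * τ ^ 2) - 4 * (γt - 1) * (3 * γt ^ 2 * (2 * τ)))
        / (3 * γt ^ 2 * τ ^ 2) ^ 2 := by
    have h := (hasDerivAt_const τ (4 * (γt - 1))).div hden hdne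
    exact h.deriv
  -- derivative of rhoT
  have hrpow : HasDerivAt (fun t : ℝ => t ^ (1 - 2 / γt))
      ((1 - 2 / γt) * τ ^ (1 - 2 / γt - 1)) τ :=
    Real.hasDerivAt_rpow_const (Or.inl hτ0)
  have hAd : HasDerivAt (fun t : ℝ => t ^ (1 - 2 / γt) + Q)
      ((1 - 2 / γt) * τ ^ (1 - 2 / γt - 1)) τ := hrpow.add_const Q
  have hfrac : HasDerivAt (fun t : ℝ => 1 + (γt - 2) * t ^ (1 - 2 / γt) / (t ^ (1 - 2 / γt) + Q))
      ((((γt - 2) * ((1 - 2 / γt) * τ ^ (1 - 2 / γt - 1))) * (τ ^ (1 - 2 / γt) + Q)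
        - (γt - 2) * τ ^ (1 - 2 / γt) * ((1 - 2 / γt) * τ ^ (1 - 2 / γt - 1)))
        / (τ ^ (1 - 2 / γt) + Q) ^ 2) τ :=
    (((hrpow.const_mul (γt - 2)).div hAd hA)).const_add 1
  have hc : HasDerivAt (fun t : ℝ => 4 / (3 * γt ^ 2 * t ^ 2))
      ((0 * (3 * γt ^ 2 * τ ^ 2) - 4 * (3 * γt ^ 2 * (2 * τ))) / (3 * γt ^ 2 * τ ^ 2) ^ 2) τ :=
    (hasDerivAt_const τ (4:ℝ)).div hden hdne
  have hDρ : deriv (rhoT γt Q) τ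
      = (0 * (3 * γt ^ 2 * τ ^ 2) - 4 * (3 * γt ^ 2 * (2 * τ))) / (3 * γt ^ 2 * τ ^ 2) ^ 2
          * (1 + (γt - 2) * τ ^ (1 - 2 / γt) / (τ ^ (1 - 2 / γt) + Q))
        + 4 / (3 * γt ^ 2 * τ ^ 2)
          * ((((γt - 2) * ((1 - 2 / γt) * τ ^ (1 - 2 / γt - 1))) * (τ ^ (1 - 2 / γt) + Q)
            - (γt - 2) * τ ^ (1 - 2 / γt) * ((1 - 2 / γt) * τ ^ (1 - 2 / γt - 1)))
            / (τ ^ (1 - 2 / γt) + Q) ^ 2) := by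
    exact (hc.mul hfrac).deriv
  have hkey : τ ^ (1 - 2 / γt - 1) = τ ^ (1 - 2 / γt) / τ := by
    rw [Real.rpow_sub hτ, Real.rpow_one]
  have hπ : piT γt Q τ = (4 * (γt - 1) / (3 * γt ^ 2 * τ ^ 2))
      / (4 / (3 * γt ^ 2 * τ ^ 2)
        * (1 + (γt - 2) * τ ^ (1 - 2 / γt) / (τ ^ (1 - 2 / γt) + Q))) := rfl
  rw [hkey] at hDρ
  set a : ℝ := τ ^ (1 - 2 / γt) with ha
  have hrepr : 1 + (γt - 2) * a / (a + Q) = ((γt - 1) * a + Q) / (a + Q) := by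
    field_simp
    ring
  have h3 : (γt - 1) * a + Q ≠ 0 := by
    rw [hrepr] at hu
    exact fun h => hu (by rw [h, zero_div])
  -- simplified closed forms
  have hDp2 : deriv (pT γt) τ = -(8 * (γt - 1)) / (3 * γt ^ 2 * τ ^ 3) := by
    rw [hDp]
    field_simp
    ring
  have hDρ2 : deriv (rhoT γt Q) τ
      = 4 * ((γt - 2) ^ 2 * Q * a - 2 * γt * ((γt - 1) * a + Q) * (a + Q))
        / (3 * γt ^ 3 * τ ^ 3 * (a + Q) ^ 2) := by
    rw [hDρ]
    field_simp
    ring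
  have hπ2 : piT γt Q τ = (γt - 1) * (a + Q) / ((γt - 1) * a + Q) := by
    rw [hπ, hrepr]
    field_simp
  have eq1 : deriv (pT γt) τ * (piT γt Q τ + 1) * (piT γt Q τ + γt - 1)
      = 2 * γt * piT γt Q τ ^ 2 * deriv (rhoT γt Q) τ := by
    rw [hDp2, hDρ2, hπ2]
    field_simp
    ring
  refine ⟨eq1, fun h1 h2 => ?_⟩
  rw [div_eq_div_iff h1 h2]
  linear_combination eq1
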